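/- For nonzero reals p, r and coordinates (φ¹,φ²,φ³), the flat torsionless metric G = [[p,0,pφ²],[0,p,-pφ¹],[pφ²,-pφ¹,r+p(φ¹)²+p(φ²)²]] together with Φ = 0 satisfies the one-loop vanishing β-function equations: Ricᵢⱼ = 0 and R = 0. -/

import Mathlib

/-!
Writing `w = e^{-iφ³}(φ¹ + iφ²)`, one has `G = p |dw|² + r (dφ³)²`, so `G` is a flat metric in
rotating coordinates. Directly: `det G = p²r`, the Christoffel symbols of `G` are affine in `φ`
(the only non-constant ones are `Γ¹₃₃ = -φ¹` and `Γ²₃₃ = -φ²`), and substituting them into the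
Riemann tensor every component cancels.
-/

open scoped BigOperators

/-- Partial derivative in the `i`-th coordinate direction on `ℝ³`. -/
noncomputable def pd (i : Fin 3) (f : (Fin 3 → ℝ) → ℝ) (x : Fin 3 → ℝ) : ℝ :=
  fderiv ℝ f x (Pi.single i 1)

/-- Christoffel symbols `Γ^k_{ij}` of the Levi-Civita connection of the metric `g`. -/
noncomputable def christoffel (g : (Fin 3 → ℝ) → Matrix (Fin 3) (Fin 3) ℝ)
    (k i j : Fin 3) (x : Fin 3 → ℝ) : ℝ :=
  (1/2) * ∑ l, (g x)⁻¹ k l *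
    (pd i (fun y => g y l j) x + pd j (fun y => g y l i) x - pd l (fun y => g y i j) x)

/-- Riemann curvature tensor `R^l_{kij}`. -/
noncomputable def riemann (g : (Fin 3 → ℝ) → Matrix (Fin 3) (Fin 3) ℝ)
    (l k i j : Fin 3) (x : Fin 3 → ℝ) : ℝ :=
  pd i (fun y => christoffel g l j k y) x - pd j (fun y => christoffel g l i k y) x
    + ∑ m, (christoffel g l i m x * christoffel g m j k x
        - christoffel g l j m x * christoffel g m i k x)

/-- Ricci tensor `R_{jk} = R^i_{jik}`. -/
noncomputable def ricci (g : (Fin 3 → ℝ) → Matrix (Fin 3) (Fin 3) ℝ)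
    (j k : Fin 3) (x : Fin 3 → ℝ) : ℝ :=
  ∑ i, riemann g i j i k x

/-- Scalar curvature `R = g^{jk} R_{jk}`. -/
noncomputable def scalarCurv (g : (Fin 3 → ℝ) → Matrix (Fin 3) (Fin 3) ℝ)
    (x : Fin 3 → ℝ) : ℝ :=
  ∑ j, ∑ k, (g x)⁻¹ j k * ricci g j k x

/-- The metric of the sigma model built from the Manin triple (7₀|1) with `E₀ = diag(p,p,r)`. -/
noncomputable def metric701 (p r : ℝ) (x : Fin 3 → ℝ) : Matrix (Fin 3) (Fin 3) ℝ :=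
  !![p, 0, p * x 1;
     0, p, -p * x 0;
     p * x 1, -p * x 0, r + p * (x 0)^2 + p * (x 1)^2]

section PartialDerivative

variable {f g : (Fin 3 → ℝ) → ℝ} {x : Fin 3 → ℝ} (i : Fin 3)

lemma pd_const (c : ℝ) : pd i (fun _ => c) x = 0 := by
  simp [pd]

lemma pd_apply (j : Fin 3) : pd i (fun y => y j) x = if i = j then 1 else 0 := by
  rw [pd, fderiv_apply (differentiableAt_id (x := x)) j]
  simp [Pi.single_apply, eq_comm]

lemma pd_add (hf : DifferentiableAt ℝ f x) (hg : DifferentiableAt ℝ g x) :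
    pd i (fun y => f y + g y) x = pd i f x + pd i g x := by
  simp [pd, fderiv_fun_add hf hg]

lemma pd_neg : pd i (fun y => -f y) x = -pd i f x := by
  simp [pd, fderiv_fun_neg]

lemma pd_mul (hf : DifferentiableAt ℝ f x) (hg : DifferentiableAt ℝ g x) :
    pd i (fun y => f y * g y) x = f x * pd i g x + g x * pd i f x := by
  simp [pd, fderiv_fun_mul hf hg]

lemma pd_pow (hf : DifferentiableAt ℝ f x) (n : ℕ) :
    pd i (fun y => f y ^ n) x = n * f x ^ (n - 1) * pd i f x := by
  simp [pd, fderiv_fun_pow n hf, mul_assoc]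

end PartialDerivative

section Curvature

variable {g : (Fin 3 → ℝ) → Matrix (Fin 3) (Fin 3) ℝ} {x : Fin 3 → ℝ}

lemma ricci_eq_zero_of_riemann_eq_zero (h : ∀ l k i j, riemann g l k i j x = 0) (j k : Fin 3) :
    ricci g j k x = 0 :=
  Finset.sum_eq_zero fun i _ => h i j i k

lemma scalarCurv_eq_zero_of_ricci_eq_zero (h : ∀ j k, ricci g j k x = 0) :
    scalarCurv g x = 0 := by
  simp [scalarCurv, h]

end Curvature

section Metric701

variable {p r : ℝ}

noncomputable def metric701Inv (p r : ℝ) (x : Fin 3 → ℝ) : Matrix (Fin 3) (Fin 3) ℝ :=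
  !![1/p + (x 1)^2/r, -(x 0 * x 1)/r, -(x 1)/r;
     -(x 0 * x 1)/r, 1/p + (x 0)^2/r, x 0/r;
     -(x 1)/r, x 0/r, 1/r]

lemma metric701_inv (hp : p ≠ 0) (hr : r ≠ 0) (x : Fin 3 → ℝ) :
    (metric701 p r x)⁻¹ = metric701Inv p r x := by
  refine Matrix.inv_eq_right_inv ?_
  ext i j
  fin_cases i <;> fin_cases j <;>
    simp [metric701, metric701Inv, Matrix.mul_apply, Fin.sum_univ_three] <;> field_simp <;> ring

/- The zero slices are written out as `!![0, 0, 0; …]`: with the literal `0 : Matrix`, `simp`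
cannot evaluate the entries. -/
noncomputable def metric701Deriv (p : ℝ) (x : Fin 3 → ℝ) (i a b : Fin 3) : ℝ :=
  ![!![0, 0, 0; 0, 0, -p; 0, -p, 2 * p * x 0],
    !![0, 0, p; 0, 0, 0; p, 0, 2 * p * x 1],
    !![0, 0, 0; 0, 0, 0; 0, 0, 0]] i a b

lemma pd_metric701 (i a b : Fin 3) (x : Fin 3 → ℝ) :
    pd i (fun y => metric701 p r y a b) x = metric701Deriv p x i a b := by
  fin_cases i <;> fin_cases a <;> fin_cases b <;>
    simp (disch := fun_prop) [metric701, metric701Deriv, pd_add, pd_neg, pd_mul, pd_pow,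
      pd_apply, pd_const] <;> ring

noncomputable def christoffel701 (x : Fin 3 → ℝ) (k i j : Fin 3) : ℝ :=
  ![!![0, 0, 0; 0, 0, 1; 0, 1, -x 0],
    !![0, 0, -1; 0, 0, 0; -1, 0, -x 1],
    !![0, 0, 0; 0, 0, 0; 0, 0, 0]] k i j

lemma christoffel_metric701 (hp : p ≠ 0) (hr : r ≠ 0) (k i j : Fin 3) (x : Fin 3 → ℝ) :
    christoffel (metric701 p r) k i j x = christoffel701 x k i j := by
  simp only [christoffel, metric701_inv hp hr, pd_metric701, Fin.sum_univ_three]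
  fin_cases k <;> fin_cases i <;> fin_cases j <;>
    simp [metric701Inv, metric701Deriv, christoffel701] <;> field_simp <;> ring

lemma riemann_metric701 (hp : p ≠ 0) (hr : r ≠ 0) (l k i j : Fin 3) (x : Fin 3 → ℝ) :
    riemann (metric701 p r) l k i j x = 0 := by
  have hΓ : christoffel (metric701 p r) = fun k i j x => christoffel701 x k i j := by
    funext k i j x
    exact christoffel_metric701 hp hr k i j x
  simp only [riemann, hΓ, Fin.sum_univ_three]
  fin_cases l <;> fin_cases k <;> fin_cases i <;> fin_cases j <;>
    simp (disch := fun_prop) [christoffel701, pd_neg, pd_apply, pd_const]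

end Metric701

/-- with vanishing torsion and vanishing dilaton, the one-loop
β-function equations for the (7₀|1) model reduce to `Ric = 0` and `R = 0`, and they hold. -/
theorem beta_function_eqs_metric701 (p r : ℝ) (hp : p ≠ 0) (hr : r ≠ 0) :
    (∀ (i j : Fin 3) (x : Fin 3 → ℝ), ricci (metric701 p r) i j x = 0) ∧
    (∀ x : Fin 3 → ℝ, scalarCurv (metric701 p r) x = 0) := by
  have hRic : ∀ (i j : Fin 3) (x : Fin 3 → ℝ), ricci (metric701 p r) i j x = 0 :=
    fun i j x => ricci_eq_zero_of_riemann_eq_zero (riemann_metric701 hp hr · · · · x) i j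
  exact ⟨hRic, fun x => scalarCurv_eq_zero_of_ricci_eq_zero (hRic · · x)⟩
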